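/- arXiv:2402.07853 — 3 statements merged into one kernel-verified Lean document; each statement's English description precedes it below -/
import Mathlib

section
/- For positive integers a ≥ 2 and d, k ≥ 1 with gcd(a, d) = 1, the Frobenius number of the arithmetic progression a, a+d, a+2d, ..., a+kd equals a·⌊(a−2)/k⌋ + d(a−1). -/
/-!
A combination of `a, a + d, …, a + k d` with `m` summands in total is exactly a number
`m a + t d` with `t ≤ k m`. Since `d` is invertible mod `a`, every `N` is `≡ t d` for a unique
`t < a`, and the least such number in that residue class is `⌈t / k⌉ a + t d`. The largest of
these minimal elements occurs at `t = a - 1`, and subtracting `a` gives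
`a ⌊(a - 2) / k⌋ + d (a - 1)`.
-/

open Finset

theorem sum_mul_add_mul_eq (a d : ℕ) {k : ℕ} (c : Fin (k + 1) → ℕ) :
    ∑ i, c i * (a + i * d) = (∑ i, c i) * a + (∑ i, c i * i) * d := by
  simp only [sum_mul, ← sum_add_distrib]
  exact sum_congr rfl fun i _ => by ring

theorem sum_mul_val_le (k : ℕ) (c : Fin (k + 1) → ℕ) : ∑ i, c i * i ≤ k * ∑ i, c i := by
  rw [mul_sum]
  exact sum_le_sum fun i _ => by rw [mul_comm k]; exact Nat.mul_le_mul_left _ (Fin.is_le i)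

theorem exists_eq_sum_mul_progression_iff (a d k N : ℕ) :
    (∃ c : Fin (k + 1) → ℕ, N = ∑ i, c i * (a + i * d)) ↔
      ∃ m t, t ≤ k * m ∧ N = m * a + t * d := by
  constructor
  · rintro ⟨c, rfl⟩
    exact ⟨_, _, sum_mul_val_le k c, sum_mul_add_mul_eq a d c⟩
  · rintro ⟨m, t, ht, rfl⟩
    induction m generalizing t with
    | zero => exact ⟨0, by simp_all⟩
    | succ m ih =>
      -- one more summand `a + s d` absorbs up to `k` of the `d`'s
      obtain ⟨u, s, rfl, hs, hu⟩ : ∃ u s, t = u + s ∧ s ≤ k ∧ u ≤ k * m :=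
        ⟨t - min t k, min t k, by omega, by omega, by rw [Nat.mul_succ] at ht; omega⟩
      obtain ⟨c, hc⟩ := ih u hu
      refine ⟨c + Pi.single ⟨s, by omega⟩ 1, ?_⟩
      simp only [Pi.add_apply, add_mul, sum_add_distrib, ← hc, Pi.single_apply, ite_mul,
        one_mul, zero_mul, sum_ite_eq', mem_univ, if_true]
      ring

theorem frobenius_ne_mul_add_mul {a d k m t : ℕ} (ha : 2 ≤ a) (had : a.Coprime d)
    (ht : t ≤ k * m) : a * ((a - 2) / k) + d * (a - 1) ≠ m * a + t * d := by
  set q := (a - 2) / k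
  intro he
  -- adding `d` to both sides makes the left side a multiple of `a`
  have hmul : a * (q + d) = m * a + (t + 1) * d := by
    obtain ⟨b, rfl⟩ : ∃ b, a = b + 1 := ⟨a - 1, by omega⟩
    simp only [Nat.add_sub_cancel] at he
    linear_combination he
  obtain ⟨s, hs⟩ : a ∣ t + 1 :=
    had.dvd_of_dvd_mul_right <| (Nat.dvd_add_right (dvd_mul_left a m)).mp ⟨_, hmul.symm⟩
  have hs_pos : 0 < s := Nat.pos_of_ne_zero (by rintro rfl; omega)
  have hqd : q + d = m + s * d :=
    Nat.eq_of_mul_eq_mul_left (show 0 < a by omega) (by rw [hmul, hs]; ring)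
  have hmq : m ≤ q := by have := Nat.le_mul_of_pos_left d hs_pos; omega
  have hkq : k * q ≤ a - 2 := mul_comm q k ▸ Nat.div_mul_le_self (a - 2) k
  -- `t + 1 ≤ k m + 1 ≤ k q + 1 ≤ a - 1 < a s`
  have := Nat.mul_le_mul_left k hmq
  have := Nat.le_mul_of_pos_right a hs_pos
  omega

theorem exists_eq_mul_add_mul_of_frobenius_lt {a d k N : ℕ} (ha : 0 < a) (hk : 0 < k)
    (had : a.Coprime d) (hN : a * ((a - 2) / k) + d * (a - 1) < N) :
    ∃ m t, t ≤ k * m ∧ N = m * a + t * d := by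
  obtain ⟨t, hta, htN⟩ := Nat.exists_mul_mod_eq_of_coprime N had.symm ha.ne'
  -- `(t ⌈/⌉ k) a + t d` is the least combination in the residue class of `N`
  set m₀ := t ⌈/⌉ k
  have hm₀ : m₀ ≤ (a - 2) / k + 1 :=
    (ceilDiv_le_iff_le_mul hk).2 (by have := Nat.lt_mul_div_succ (a - 2) hk; omega)
  have hmod : m₀ * a + t * d ≡ N [MOD a] := by
    rw [Nat.ModEq, Nat.mul_add_mod_self_right, mul_comm, htN]
  have hL : m₀ * a + t * d ≤ N := by
    refine hmod.le_of_lt_add ?_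
    have h₁ := Nat.mul_le_mul_right a hm₀
    have h₂ := Nat.mul_le_mul_right d (Nat.le_sub_one_of_lt hta)
    rw [add_mul, one_mul] at h₁
    rw [mul_comm a, mul_comm d] at hN
    omega
  obtain ⟨j, hj⟩ := (Nat.modEq_iff_dvd' hL).mp hmod
  refine ⟨m₀ + j, t, ?_, ?_⟩
  · exact ((ceilDiv_le_iff_le_mul hk).1 le_rfl).trans (Nat.mul_le_mul_left k (by omega))
  · rw [add_mul, mul_comm j]
    omega

theorem frobenius_arithmetic_progression_general (a d k : ℕ) (ha : 2 ≤ a)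
    (hk : 1 ≤ k) (had : Nat.gcd a d = 1) :
    (¬ ∃ c : Fin (k + 1) → ℕ,
        a * ((a - 2) / k) + d * (a - 1) = ∑ i, c i * (a + (i : ℕ) * d)) ∧
      ∀ N : ℕ, a * ((a - 2) / k) + d * (a - 1) < N →
        ∃ c : Fin (k + 1) → ℕ, N = ∑ i, c i * (a + (i : ℕ) * d) := by
  simp only [exists_eq_sum_mul_progression_iff]
  refine ⟨fun ⟨m, t, ht, he⟩ => frobenius_ne_mul_add_mul ha had ht he, fun N hN => ?_⟩
  exact exists_eq_mul_add_mul_of_frobenius_lt (by omega) hk had hN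

/-- The Frobenius number of the arithmetic progression
`a, a+d, ..., a+kd` (with `gcd(a,d)=1`) equals `a*⌊(a-2)/k⌋ + d*(a-1)`. -/
theorem frobenius_arithmetic_progression (a d k : ℕ) (ha : 2 ≤ a)
    (hd : 1 ≤ d) (hk : 1 ≤ k) (had : Nat.gcd a d = 1) :
    (¬ ∃ c : Fin (k + 1) → ℕ,
        a * ((a - 2) / k) + d * (a - 1) = ∑ i, c i * (a + (i : ℕ) * d)) ∧
      ∀ N : ℕ, a * ((a - 2) / k) + d * (a - 1) < N →
        ∃ c : Fin (k + 1) → ℕ, N = ∑ i, c i * (a + (i : ℕ) * d) :=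
  frobenius_arithmetic_progression_general a d k ha hk had
end

section
/- For coprime a, b ≥ 2, exactly half of the integers in {1, 2, ..., ab − a − b} are representable as nonnegative combinations of a and b; i.e., the number of nonrepresentable positive integers equals (a−1)(b−1)/2. -/
/-!
Write `F = ab - a - b`. For `N + M = F`, exactly one of `N`, `M` is representable. Both cannot be:
adding the two representations gives `(x + 1) a + (y + 1) b = ab`, and coprimality forces
`b ∣ x + 1` and `a ∣ y + 1`, so the left side is at least `2ab`. One of them is: writing
`N = x a + y b` with `0 ≤ x < b` and `y ∈ ℤ`, either `y ≥ 0`, or `M = (b - 1 - x) a + (-1 - y) b`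
with both coefficients nonnegative. So `N ↦ F - N` swaps the representable and the
nonrepresentable numbers in `{0, …, F}`, and half of these `F + 1 = (a - 1)(b - 1)` numbers are gaps.
-/

open Finset

def Representable (a b N : ℕ) : Prop := ∃ x y : ℕ, N = x * a + y * b

lemma Nat.Coprime.exists_eq_mul_add_mul {a b : ℕ} (hab : a.Coprime b) (hb : 0 < b) (n : ℤ) :
    ∃ x : ℕ, x < b ∧ ∃ y : ℤ, n = x * a + y * b := by
  obtain ⟨s, t, hst⟩ : IsCoprime (a : ℤ) b := Nat.isCoprime_iff_coprime.mpr hab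
  have hdiv := Int.emod_add_mul_ediv (n * s) b
  have hlt := Int.emod_lt_of_pos (n * s) (by omega : (0 : ℤ) < b)
  refine ⟨(n * s % b).toNat, by omega, n * s / b * a + n * t, ?_⟩
  rw [Int.toNat_of_nonneg (Int.emod_nonneg _ (by omega))]
  linear_combination (-n) * hst - (a : ℤ) * hdiv

lemma not_representable_of_add_eq {a b N M : ℕ} (ha : 0 < a) (hb : 0 < b) (hab : a.Coprime b)
    (h : N + M + a + b = a * b) (hN : Representable a b N) : ¬ Representable a b M := by
  obtain ⟨x, y, rfl⟩ := hN
  rintro ⟨u, v, rfl⟩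
  have hsum : (x + u + 1) * a + (y + v + 1) * b = a * b := by rw [← h]; ring
  have hbx : b ≤ x + u + 1 := by
    refine Nat.le_of_dvd (by omega) (hab.symm.dvd_of_dvd_mul_right ?_)
    exact (Nat.dvd_add_left (dvd_mul_left b _)).mp (hsum ▸ dvd_mul_left b a)
  have hay : a ≤ y + v + 1 := by
    refine Nat.le_of_dvd (by omega) (hab.dvd_of_dvd_mul_right ?_)
    exact (Nat.dvd_add_right (dvd_mul_left a _)).mp (hsum ▸ dvd_mul_right a b)
  nlinarith [Nat.mul_le_mul_right a hbx, Nat.mul_le_mul_right b hay, Nat.mul_pos ha hb]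

lemma representable_or_representable_of_add_eq {a b N M : ℕ} (hb : 0 < b) (hab : a.Coprime b)
    (h : N + M + a + b = a * b) : Representable a b N ∨ Representable a b M := by
  obtain ⟨x, hxb, y, hy⟩ := hab.exists_eq_mul_add_mul hb N
  have hZ : (N : ℤ) + M + a + b = a * b := by exact_mod_cast h
  rcases le_or_gt 0 y with hy0 | hy0
  · refine .inl ⟨x, y.toNat, ?_⟩
    zify
    rw [Int.toNat_of_nonneg hy0, hy]
  · refine .inr ⟨b - (x + 1), (-1 - y).toNat, ?_⟩
    zify [show x + 1 ≤ b by omega]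
    rw [Int.toNat_of_nonneg (by omega)]
    linear_combination hZ - hy

lemma representable_iff_not_of_add_eq {a b N M : ℕ} (ha : 0 < a) (hb : 0 < b) (hab : a.Coprime b)
    (h : N + M + a + b = a * b) : Representable a b M ↔ ¬ Representable a b N :=
  ⟨fun hM hN => not_representable_of_add_eq ha hb hab h hN hM,
    (representable_or_representable_of_add_eq hb hab h).resolve_left⟩

lemma card_filter_not_range_of_reflect_iff_not {F : ℕ} (p : ℕ → Prop) [DecidablePred p]
    (hp : ∀ N ≤ F, p (F - N) ↔ ¬ p N) : #{N ∈ range (F + 1) | ¬ p N} = (F + 1) / 2 := by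
  have hswap : #{N ∈ range (F + 1) | ¬ p N} = #{N ∈ range (F + 1) | p N} := by
    refine card_nbij' (F - ·) (F - ·) ?_ ?_ ?_ ?_ <;>
      simp only [coe_filter, Set.MapsTo, Set.LeftInvOn, Set.mem_ofPred_eq, mem_range]
    · exact fun N ⟨hN, hpN⟩ => ⟨by omega, (hp N (by omega)).mpr hpN⟩
    · exact fun N ⟨hN, hpN⟩ => ⟨by omega, fun hp' => (hp N (by omega)).mp hp' hpN⟩
    all_goals exact fun N ⟨hN, _⟩ => by omega
  have htotal := card_filter_add_card_filter_not (s := range (F + 1)) p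
  rw [card_range, ← hswap] at htotal
  omega

/-- Sylvester's count: for coprime `a, b ≥ 2`, the number of positive integers
in `{1, ..., ab − a − b}` that are not representable as nonnegative
combinations of `a` and `b` equals `(a−1)(b−1)/2`, i.e. exactly half of them. -/
theorem sylvester_gap_count (a b : ℕ) (ha : 2 ≤ a) (hb : 2 ≤ b)
    (hab : Nat.gcd a b = 1) :
    Set.ncard {N : ℕ | 1 ≤ N ∧ N ≤ a * b - a - b ∧
        ¬ ∃ x y : ℕ, N = x * a + y * b} = (a - 1) * (b - 1) / 2 := by
  classical
  set F := a * b - a - b with hFdef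
  have hF : F + a + b = a * b := by
    have := Nat.mul_le_mul_right b ha
    have := Nat.mul_le_mul_left a hb
    omega
  have hgaps : {N : ℕ | 1 ≤ N ∧ N ≤ F ∧ ¬ ∃ x y : ℕ, N = x * a + y * b} =
      ↑{N ∈ range (F + 1) | ¬ Representable a b N} := by
    ext N
    simp only [Set.mem_ofPred_eq, mem_coe, mem_filter, mem_range]
    refine ⟨fun ⟨_, hN, hrep⟩ => ⟨by omega, hrep⟩, fun ⟨hN, hrep⟩ => ⟨?_, by omega, hrep⟩⟩
    exact Nat.pos_of_ne_zero fun h0 => hrep ⟨0, 0, by simp [h0]⟩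
  have hcount := card_filter_not_range_of_reflect_iff_not (F := F) (Representable a b)
    fun N hN => representable_iff_not_of_add_eq (by omega) (by omega) hab (by omega)
  rw [hgaps, Set.ncard_coe_finset, hcount, Nat.sub_one_mul, Nat.mul_sub_one]
  congr 1
  omega
end

section
/- Let i, k ≥ 3 with gcd(F_i, F_{i+2}) = 1 and suppose r = ⌊(F_i − 1)/F_k⌋ = 0. Then g(F_i, F_{i+2}, F_{i+k}) = (F_i − 1)·F_{i+2} − F_i·(r·F_{k−2} + 1) = (F_i − 1)·F_{i+2} − F_i. -/
/-!
Write `a = F_i`, `b = F_{i+2}`, `c = F_{i+k}`. Since `gcd(i, i+2) ∣ 2`, `a` and `b` are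
coprime, so `ab - a - b` is the Frobenius number of `{a, b}`. The hypothesis `r = 0` forces
`k = 0` or `k ≥ i`; then either `i ∣ k`, so `a ∣ c`, or `k > i`, so
`c ≥ F_{2i+1} = F_i² + F_{i+1}² ≥ ab`. In both cases `c` already lies in the semigroup
generated by `a` and `b`, so adding it changes nothing.
-/

theorem exists_mul_add_mul_add_mul_iff_mem_closure_pair {a b c N : ℕ}
    (hc : c ∈ AddSubmonoid.closure {a, b}) :
    (∃ x y z : ℕ, N = x * a + y * b + z * c) ↔ N ∈ AddSubmonoid.closure {a, b} := by
  have ha : a ∈ AddSubmonoid.closure {a, b} := AddSubmonoid.subset_closure (Set.mem_insert a {b})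
  have hb : b ∈ AddSubmonoid.closure {a, b} :=
    AddSubmonoid.subset_closure (Set.mem_insert_of_mem a (Set.mem_singleton b))
  constructor
  · rintro ⟨x, y, z, rfl⟩
    simp only [← smul_eq_mul]
    exact add_mem (add_mem (nsmul_mem ha x) (nsmul_mem hb y)) (nsmul_mem hc z)
  · rw [AddSubmonoid.mem_closure_pair]
    rintro ⟨x, y, rfl⟩
    exact ⟨x, y, 0, by simp⟩

namespace Nat

theorem coprime_fib_fib_add_two (n : ℕ) : Coprime (fib n) (fib (n + 2)) := by
  have hdvd : gcd n (n + 2) ∣ 2 :=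
    (Nat.dvd_add_right (gcd_dvd_left n (n + 2))).1 (gcd_dvd_right n (n + 2))
  rw [Coprime, ← fib_gcd]
  rcases (dvd_prime prime_two).1 hdvd with h | h <;> simp [h]

theorem one_lt_fib {n : ℕ} (hn : 3 ≤ n) : 1 < fib n :=
  fib_two ▸ (fib_lt_fib le_rfl).2 hn

theorem le_of_fib_le_fib {m n : ℕ} (hm : 3 ≤ m) (h : fib m ≤ fib n) : m ≤ n := by
  by_contra! hnm
  rcases lt_or_ge n 2 with hn | hn
  · have hfn : fib n ≤ 1 := fib_one ▸ fib_mono (by omega)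
    have := one_lt_fib hm
    omega
  · exact absurd h (not_le.2 ((fib_lt_fib hn).2 hnm))

theorem frobeniusNumber_fib_fib_add_two {i : ℕ} (hi : 3 ≤ i) :
    FrobeniusNumber (fib i * fib (i + 2) - fib i - fib (i + 2)) {fib i, fib (i + 2)} :=
  frobeniusNumber_pair (coprime_fib_fib_add_two i) (one_lt_fib hi) (one_lt_fib (by omega))

theorem fib_mul_fib_add_two_le_fib_add {i k : ℕ} (hik : i < k) :
    fib i * fib (i + 2) ≤ fib (i + k) := by
  have hsq : fib (i + i + 1) = fib i * fib i + fib (i + 1) * fib (i + 1) := fib_add i i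
  have hsucc : fib i ≤ fib (i + 1) := fib_le_fib_succ
  calc fib i * fib (i + 2) = fib i * fib i + fib i * fib (i + 1) := by rw [fib_add_two]; ring
    _ ≤ fib (i + i + 1) := by rw [hsq]; gcongr
    _ ≤ fib (i + k) := fib_mono (by omega)

theorem fib_add_mem_closure_fib_fib_add_two {i k : ℕ} (hi : 3 ≤ i) (hk : k = 0 ∨ i ≤ k) :
    fib (i + k) ∈ AddSubmonoid.closure {fib i, fib (i + 2)} := by
  by_cases hik : i ∣ k
  · obtain ⟨d, hd⟩ := fib_dvd i (i + k) (Nat.dvd_add_self_left.2 hik)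
    rw [hd, mul_comm, ← smul_eq_mul]
    exact nsmul_mem (AddSubmonoid.subset_closure (Set.mem_insert _ _)) d
  · have hlt : i < k := by
      rcases hk with rfl | hk
      · exact absurd (dvd_zero i) hik
      · exact lt_of_le_of_ne hk (fun h => hik (h ▸ dvd_rfl))
    have hpos : 0 < fib i := fib_pos.2 (by omega)
    have hbig : fib i * fib (i + 2) - fib i - fib (i + 2) < fib (i + k) :=
      calc fib i * fib (i + 2) - fib i - fib (i + 2)
          < fib i * fib (i + 2) := sub_lt_of_lt (sub_lt (mul_pos hpos (fib_pos.2 (by omega))) hpos)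
        _ ≤ fib (i + k) := fib_mul_fib_add_two_le_fib_add hlt
    exact (frobeniusNumber_iff.1 (frobeniusNumber_fib_fib_add_two hi)).2 _ hbig

end Nat

theorem frobenius_fib_spaced_general (i k : ℕ) (hi : 3 ≤ i)
    (hr : (Nat.fib i - 1) / Nat.fib k = 0) :
    (¬ ∃ x y z : ℕ,
        (Nat.fib i - 1) * Nat.fib (i + 2) - Nat.fib i =
          x * Nat.fib i + y * Nat.fib (i + 2) + z * Nat.fib (i + k)) ∧
      ∀ N : ℕ, (Nat.fib i - 1) * Nat.fib (i + 2) - Nat.fib i < N →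
        ∃ x y z : ℕ, N = x * Nat.fib i + y * Nat.fib (i + 2) + z * Nat.fib (i + k) := by
  have hk : k = 0 ∨ i ≤ k := by
    rcases Nat.div_eq_zero_iff.1 hr with h | h
    · exact Or.inl (Nat.fib_eq_zero.1 h)
    · exact Or.inr (Nat.le_of_fib_le_fib hi (by omega))
  have hG : (Nat.fib i - 1) * Nat.fib (i + 2) - Nat.fib i =
      Nat.fib i * Nat.fib (i + 2) - Nat.fib i - Nat.fib (i + 2) := by
    rw [Nat.sub_one_mul, Nat.sub_right_comm]
  simp only [hG, exists_mul_add_mul_add_mul_iff_mem_closure_pair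
    (Nat.fib_add_mem_closure_fib_fib_add_two hi hk)]
  exact frobeniusNumber_iff.1 (Nat.frobeniusNumber_fib_fib_add_two hi)

/-- For `i, k ≥ 3` with `gcd(F_i, F_{i+2}) = 1` and `r = ⌊(F_i − 1)/F_k⌋ = 0`,
the Frobenius number of `F_i, F_{i+2}, F_{i+k}` equals `(F_i − 1)·F_{i+2} − F_i`. -/
theorem frobenius_fib_spaced (i k : ℕ) (hi : 3 ≤ i) (hk : 3 ≤ k)
    (hcop : Nat.gcd (Nat.fib i) (Nat.fib (i + 2)) = 1)
    (hgcd : Nat.gcd (Nat.fib i) (Nat.gcd (Nat.fib (i + 2)) (Nat.fib (i + k))) = 1)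
    (hr : (Nat.fib i - 1) / Nat.fib k = 0) :
    (¬ ∃ x y z : ℕ,
        (Nat.fib i - 1) * Nat.fib (i + 2) - Nat.fib i =
          x * Nat.fib i + y * Nat.fib (i + 2) + z * Nat.fib (i + k)) ∧
      ∀ N : ℕ, (Nat.fib i - 1) * Nat.fib (i + 2) - Nat.fib i < N →
        ∃ x y z : ℕ, N = x * Nat.fib i + y * Nat.fib (i + 2) + z * Nat.fib (i + k) :=
  frobenius_fib_spaced_general i k hi hr
end
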